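/- Let m and N be positive integers, let a ∈ ℚ with 0 < |a| < 1, let b ∈ ℝ and τ ∈ ℍ, and set Y := e^{2πi(aNτ + b)}. Then Σ_{k∈ℤ} Y^{2km} q^{Nmk²} (Y q^{Nk} + 1)/(Y q^{Nk} − 1) = − e^{−4πi m a b} · q^{−N m a²} · Σ_{(k,l)∈ℤ²} ( sgn(k+a) + sgn(l) ) e^{2πi(2m(k+a)+l)b} q^{N( m(k+a)² + (k+a)l )}, and all series converge absolutely. (The second factor on the right is the holomorphic indefinite theta function Θ_{(a,0),(b,0)}(Nτ) of the paper, for the quadratic form with matrix A = [[2m,1],[1,0]] and vectors c₁ = (0,1), c₂ = (−1,2m).) -/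

import Mathlib

open Complex Real

/-- `qp τ c` is `q^c = e^{2πicτ}`. -/
noncomputable def qp (τ : ℂ) (c : ℝ) : ℂ := Complex.exp (2 * Real.pi * Complex.I * c * τ)

/-- `ph x = e^{2πix}` for real `x`. -/
noncomputable def ph (x : ℝ) : ℂ := Complex.exp (2 * Real.pi * Complex.I * x)

/-!
Fix `k`, put `x = k + a` (never zero, as `0 < |a| < 1`) and `u = Y q^{Nk} = e^{2πib} q^{Nx}`.
Then `|u| < 1` exactly when `x > 0`, and in both cases the signed geometric series
`∑_l (sgn x + sgn l) u^l` sums to `(1 + u)/(1 - u)`. As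
`Y^{2km} q^{Nmk²} = e^{-4πimab} q^{-Nma²} · e^{4πimxb} q^{Nmx²}`, the `k`-th Appell–Lerch term is,
up to this prefactor and a sign, the sum of row `k` of the theta series. A theta summand vanishes
unless `x l ≥ 0`, and then, as `|x| ≥ min |a| (1 - |a|)`, it is bounded by a Gaussian in `x` times
a geometric term in `|l|`; so the double series converges absolutely and may be summed by rows.
-/

lemma norm_qp (τ : ℂ) (c : ℝ) : ‖qp τ c‖ = Real.exp (-(2 * π * τ.im * c)) := by
  rw [qp, Complex.norm_exp]
  congr 1
  simp only [mul_re, re_ofNat, ofReal_re, im_ofNat, ofReal_im, mul_zero, sub_zero, I_re, mul_im,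
    zero_mul, add_zero, I_im, mul_one, sub_self, zero_add, zero_sub, neg_inj]
  ring

lemma norm_ph (x : ℝ) : ‖ph x‖ = 1 := by
  rw [ph, Complex.norm_exp]
  simp [Complex.mul_re, Complex.mul_im]

lemma hasSum_one_add_sign_mul_zpow {u : ℂ} (hu : ‖u‖ < 1) :
    HasSum (fun l : ℤ => ((1 + Real.sign (l : ℝ) : ℝ) : ℂ) * u ^ l) ((1 + u) / (1 - u)) := by
  set f : ℤ → ℂ := fun l => ((1 + Real.sign (l : ℝ) : ℝ) : ℂ) * u ^ l
  have hpos : HasSum (fun n : ℕ => f (n + 1)) (2 * u * (1 - u)⁻¹) := by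
    refine ((hasSum_geometric_of_norm_lt_one hu).mul_left (2 * u)).congr_fun fun n => ?_
    simp only [f]
    rw [Real.sign_of_pos (by positivity), ← Nat.cast_succ, zpow_natCast, pow_succ]
    push_cast
    ring
  have hneg : HasSum (fun n : ℕ => f (-(n + 1))) 0 := by
    refine hasSum_zero.congr_fun fun n => ?_
    simp only [f]
    rw [Real.sign_of_neg (by push_cast; linarith [n.cast_nonneg (α := ℝ)])]
    simp
  have hu1 : 1 - u ≠ 0 := sub_ne_zero.mpr fun h => by simp [← h] at hu
  convert hpos.of_add_one_of_neg_add_one hneg using 1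
  simp only [f, Int.cast_zero, Real.sign_zero, add_zero, Complex.ofReal_one, zpow_zero, mul_one]
  field_simp
  ring

lemma hasSum_sign_add_sign_mul_zpow {x c : ℝ} {u : ℂ} (hx : x ≠ 0) (hc : 0 < c)
    (hu : ‖u‖ = Real.exp (-(c * x))) :
    HasSum (fun l : ℤ => ((Real.sign x + Real.sign (l : ℝ) : ℝ) : ℂ) * u ^ l)
      ((1 + u) / (1 - u)) := by
  rcases hx.lt_or_gt with hx | hx
  · have hu' : ‖u⁻¹‖ < 1 := by
      rw [norm_inv, hu, ← Real.exp_neg, Real.exp_lt_one_iff]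
      nlinarith
    have hu0 : u ≠ 0 := norm_pos_iff.mp (hu ▸ Real.exp_pos _)
    have hu1 : u - 1 ≠ 0 := sub_ne_zero.mpr fun h => by simp [h] at hu'
    -- substitute `l ↦ -l` and apply the case `‖u⁻¹‖ < 1`
    have h := (hasSum_one_add_sign_mul_zpow hu').neg
    rw [show -((1 + u⁻¹) / (1 - u⁻¹)) = (1 + u) / (1 - u) by
      rw [← neg_sub u 1]; field_simp; ring] at h
    rw [← (Equiv.neg ℤ).hasSum_iff]
    refine h.congr_fun fun l => ?_
    simp only [Real.sign_of_neg hx, ofReal_add, ofReal_neg, ofReal_one, Equiv.neg_apply,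
      Function.comp_apply, Int.cast_neg, Real.sign_neg, zpow_neg, inv_zpow']
    ring
  · rw [Real.sign_of_pos hx]
    exact hasSum_one_add_sign_mul_zpow (by rw [hu, Real.exp_lt_one_iff]; nlinarith)

lemma sign_add_sign_eq_zero_of_mul_neg {x y : ℝ} (h : x * y < 0) :
    Real.sign x + Real.sign y = 0 := by
  rcases mul_neg_iff.mp h with ⟨hx, hy⟩ | ⟨hx, hy⟩
  · rw [Real.sign_of_pos hx, Real.sign_of_neg hy]; ring
  · rw [Real.sign_of_neg hx, Real.sign_of_pos hy]; ring

lemma abs_sign_add_sign_le_two (x y : ℝ) : |Real.sign x + Real.sign y| ≤ 2 := by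
  rcases Real.sign_apply_eq x with hx | hx | hx <;>
    rcases Real.sign_apply_eq y with hy | hy | hy <;> norm_num [hx, hy]

lemma min_abs_le_abs_int_add (α : ℝ) (k : ℤ) : min |α| (1 - |α|) ≤ |k + α| := by
  rcases lt_trichotomy k 0 with hk | rfl | hk
  · have hk : (k : ℝ) ≤ -1 := by exact_mod_cast Int.le_sub_one_of_lt hk
    exact (min_le_right _ _).trans (le_abs.mpr (Or.inr (by linarith [le_abs_self α])))
  · simp
  · have hk : (1 : ℝ) ≤ k := by exact_mod_cast hk
    exact (min_le_right _ _).trans (le_abs.mpr (Or.inl (by linarith [neg_abs_le α])))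

lemma summable_exp_neg_mul_abs_int {c : ℝ} (hc : 0 < c) :
    Summable fun l : ℤ => Real.exp (-(c * |(l : ℝ)|)) := by
  have h : Summable fun n : ℕ => Real.exp (-(c * |((n : ℤ) : ℝ)|)) := by
    simpa [mul_comm] using summable_exp_nat_mul_iff.mpr (neg_lt_zero.mpr hc)
  exact .of_nat_of_neg h (by simpa using h)

lemma Summable.norm_tsum_prod {α β E : Type*} [NormedAddCommGroup E] {f : α × β → E}
    (hf : Summable fun p => ‖f p‖) : Summable fun a => ‖∑' b, f (a, b)‖ :=
  hf.prod.of_nonneg_of_le (fun _ => norm_nonneg _) fun a =>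
    norm_tsum_le_tsum_norm (hf.prod_factor a)

section IndefiniteTheta

variable (m N : ℕ) (α b : ℝ) (τ : ℂ)

/-- The summand of `Θ_{(α,0),(b,0)}(Nτ)`. -/
noncomputable def indefThetaTerm (n : ℤ × ℤ) : ℂ :=
  ((Real.sign ((n.1 : ℝ) + α) + Real.sign (n.2 : ℝ) : ℝ) : ℂ) *
    (ph ((2 * (m : ℝ) * ((n.1 : ℝ) + α) + (n.2 : ℝ)) * b) *
      qp τ ((N : ℝ) * ((m : ℝ) * ((n.1 : ℝ) + α) ^ 2 + ((n.1 : ℝ) + α) * (n.2 : ℝ))))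

lemma indefThetaTerm_eq (k l : ℤ) :
    indefThetaTerm m N α b τ (k, l) =
      ((Real.sign ((k : ℝ) + α) + Real.sign (l : ℝ) : ℝ) : ℂ) * (ph b * qp τ (N * (k + α))) ^ l *
        (ph (2 * m * (k + α) * b) * qp τ (N * m * (k + α) ^ 2)) := by
  simp only [indefThetaTerm, ph, qp, ← Complex.exp_add]
  rw [← Complex.exp_int_mul, mul_assoc _ (Complex.exp _), ← Complex.exp_add]
  congr 2
  push_cast
  ring

variable {m N α τ}

lemma norm_indefThetaTerm_le (hτ : 0 ≤ τ.im) (k l : ℤ) :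
    ‖indefThetaTerm m N α b τ (k, l)‖ ≤
      2 * Real.exp (-π * ((k : ℝ) + α) ^ 2 * (2 * τ.im * N * m)) *
        Real.exp (-(2 * π * τ.im * N * min |α| (1 - |α|) * |(l : ℝ)|)) := by
  have hc : 0 ≤ 2 * π * τ.im * N := by positivity
  rw [indefThetaTerm]
  dsimp only
  set x : ℝ := k + α
  rw [norm_mul, norm_mul, norm_ph, one_mul, norm_qp, Complex.norm_real, Real.norm_eq_abs]
  rcases lt_or_ge (x * l) 0 with hxl | hxl
  · rw [sign_add_sign_eq_zero_of_mul_neg hxl, abs_zero, zero_mul]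
    positivity
  · have hδ : min |α| (1 - |α|) * |(l : ℝ)| ≤ x * l := by
      rw [← abs_of_nonneg hxl, abs_mul]
      exact mul_le_mul_of_nonneg_right (min_abs_le_abs_int_add α k) (abs_nonneg _)
    rw [mul_assoc (2 : ℝ) (Real.exp _), ← Real.exp_add]
    gcongr
    · exact abs_sign_add_sign_le_two _ _
    · nlinarith [mul_le_mul_of_nonneg_left hδ hc]

lemma summable_norm_indefThetaTerm (hm : 0 < m) (hN : 0 < N) (hα0 : 0 < |α|) (hα1 : |α| < 1)
    (hτ : 0 < τ.im) : Summable fun n => ‖indefThetaTerm m N α b τ n‖ := by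
  have hgauss :=
    (HurwitzZeta.hasSum_int_evenKernel α (by positivity : 0 < 2 * τ.im * N * m)).summable
  have hexp := summable_exp_neg_mul_abs_int
    (by positivity : 0 < 2 * π * τ.im * N * min |α| (1 - |α|))
  exact Summable.of_nonneg_of_le (fun _ => norm_nonneg _)
    (fun n => norm_indefThetaTerm_le b hτ.le n.1 n.2)
    ((hgauss.mul_left 2).mul_of_nonneg hexp (fun _ => by positivity) fun _ => by positivity)

lemma hasSum_indefThetaTerm_fiber (hN : 0 < N) (hτ : 0 < τ.im) {k : ℤ} (hk : (k : ℝ) + α ≠ 0) :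
    HasSum (fun l => indefThetaTerm m N α b τ (k, l))
      ((1 + ph b * qp τ (N * (k + α))) / (1 - ph b * qp τ (N * (k + α))) *
        (ph (2 * m * (k + α) * b) * qp τ (N * m * (k + α) ^ 2))) := by
  simp_rw [indefThetaTerm_eq]
  refine (hasSum_sign_add_sign_mul_zpow hk (by positivity : 0 < 2 * π * τ.im * N) ?_).mul_right _
  rw [norm_mul, norm_ph, one_mul, norm_qp]
  ring_nf

end IndefiniteTheta

lemma appellLerch_term_eq (m N : ℕ) (α b : ℝ) (τ : ℂ) (k : ℤ) :
    (ph b * qp τ (N * α)) ^ (2 * k * (m : ℤ)) * qp τ ((N : ℝ) * (m : ℝ) * (k : ℝ) ^ 2) *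
      ((ph b * qp τ (N * α) * qp τ ((N : ℝ) * (k : ℝ)) + 1) /
        (ph b * qp τ (N * α) * qp τ ((N : ℝ) * (k : ℝ)) - 1)) =
    -(Complex.exp (-(4 * π * I * (m : ℝ) * α * b)) * (qp τ (-((N : ℝ) * (m : ℝ) * α ^ 2)) *
      ((1 + ph b * qp τ (N * (k + α))) / (1 - ph b * qp τ (N * (k + α))) *
        (ph (2 * m * (k + α) * b) * qp τ (N * m * (k + α) ^ 2))))) := by
  have hu : ph b * qp τ (N * α) * qp τ (N * k) = ph b * qp τ (N * (k + α)) := by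
    simp only [ph, qp, ← Complex.exp_add]
    congr 1
    push_cast
    ring
  have hprefactor : Complex.exp (-(4 * π * I * (m : ℝ) * α * b)) *
      (qp τ (-((N : ℝ) * (m : ℝ) * α ^ 2)) *
        (ph (2 * m * (k + α) * b) * qp τ (N * m * (k + α) ^ 2))) =
      (ph b * qp τ (N * α)) ^ (2 * k * (m : ℤ)) * qp τ ((N : ℝ) * (m : ℝ) * (k : ℝ) ^ 2) := by
    simp only [ph, qp, ← Complex.exp_add]
    rw [← Complex.exp_int_mul, ← Complex.exp_add]
    congr 1
    push_cast
    ring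
  rw [hu, ← hprefactor, ← neg_sub 1 (ph b * _), div_neg, add_comm _ (1 : ℂ)]
  ring

/-- `μ_{m,0}(aNτ+b, Nτ) = -e^{-4πimab} q^{-Nma²} Θ_{(a,0),(b,0)}(Nτ)` for `0 < |a| < 1`,
where `Θ` is the holomorphic indefinite theta function attached to `A = [[2m,1],[1,0]]`,
`c₁ = (0,1)`, `c₂ = (-1,2m)`. -/
theorem specialized_appell_lerch_specialization
    (m N : ℕ) (hm : 0 < m) (hN : 0 < N) (a : ℚ) (ha0 : 0 < |a|) (ha1 : |a| < 1)
    (b : ℝ) (τ : ℂ) (hτ : 0 < τ.im)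
    (Y : ℂ) (hY : Y = Complex.exp (2 * Real.pi * Complex.I * ((a : ℂ) * N * τ + b))) :
    Summable (fun k : ℤ =>
      ‖Y ^ (2 * k * (m : ℤ)) * qp τ ((N : ℝ) * (m : ℝ) * (k : ℝ) ^ 2) *
        ((Y * qp τ ((N : ℝ) * (k : ℝ)) + 1) / (Y * qp τ ((N : ℝ) * (k : ℝ)) - 1))‖) ∧
    Summable (fun n : ℤ × ℤ =>
      ‖((Real.sign ((n.1 : ℝ) + (a : ℝ)) + Real.sign (n.2 : ℝ) : ℝ) : ℂ) *
        (ph ((2 * (m : ℝ) * ((n.1 : ℝ) + (a : ℝ)) + (n.2 : ℝ)) * b) *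
          qp τ ((N : ℝ) * ((m : ℝ) * ((n.1 : ℝ) + (a : ℝ)) ^ 2 +
            ((n.1 : ℝ) + (a : ℝ)) * (n.2 : ℝ))))‖) ∧
    (∑' k : ℤ, Y ^ (2 * k * (m : ℤ)) * qp τ ((N : ℝ) * (m : ℝ) * (k : ℝ) ^ 2) *
        ((Y * qp τ ((N : ℝ) * (k : ℝ)) + 1) / (Y * qp τ ((N : ℝ) * (k : ℝ)) - 1))) =
      -(Complex.exp (-(4 * Real.pi * Complex.I * (m : ℝ) * (a : ℝ) * b)) *
        (qp τ (-((N : ℝ) * (m : ℝ) * (a : ℝ) ^ 2)) *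
        ∑' n : ℤ × ℤ,
          ((Real.sign ((n.1 : ℝ) + (a : ℝ)) + Real.sign (n.2 : ℝ) : ℝ) : ℂ) *
            (ph ((2 * (m : ℝ) * ((n.1 : ℝ) + (a : ℝ)) + (n.2 : ℝ)) * b) *
              qp τ ((N : ℝ) * ((m : ℝ) * ((n.1 : ℝ) + (a : ℝ)) ^ 2 +
                ((n.1 : ℝ) + (a : ℝ)) * (n.2 : ℝ)))))) := by
  set α : ℝ := (a : ℝ) with hα
  have hα0 : 0 < |α| := by rw [hα, ← Rat.cast_abs]; exact_mod_cast ha0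
  have hα1 : |α| < 1 := by rw [hα, ← Rat.cast_abs]; exact_mod_cast ha1
  have hk (k : ℤ) : (k : ℝ) + α ≠ 0 := by
    intro h
    have hmin := min_abs_le_abs_int_add α k
    rw [h, abs_zero] at hmin
    exact (lt_min hα0 (sub_pos.mpr hα1)).not_ge hmin
  obtain rfl : Y = ph b * qp τ (N * α) := by
    rw [hY, ph, qp, ← Complex.exp_add, hα]
    congr 1
    push_cast
    ring
  have hF := summable_norm_indefThetaTerm b hm hN hα0 hα1 hτ
  have hterm (k : ℤ) := (hasSum_indefThetaTerm_fiber b hN hτ (hk k)).tsum_eq ▸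
    appellLerch_term_eq m N α b τ k
  refine ⟨?_, hF, ?_⟩
  · simp_rw [hterm, norm_neg, norm_mul, ← mul_assoc]
    exact hF.norm_tsum_prod.mul_left _
  · rw [tsum_congr hterm, tsum_neg, tsum_mul_left, tsum_mul_left, ← hF.of_norm.tsum_prod]
    rfl
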